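/- Define the operator h^{(0)} := (1/δ²)β² + γ²p² on ℓ²(ℤ) with β the tridiagonal operator (βψ)(μ) = (γℓ²/(4i))[(μ+2δ)ψ(μ+2δ) − μψ(μ−2δ)] on the lattice μ ∈ 2δℤ and p multiplication by γℓ²μ/2. Then 0 is not an eigenvalue of the closure of h^{(0)}. -/

import Mathlib

noncomputable section
open scoped ComplexInnerProductSpace
open Filter

variable {H : Type} [NormedAddCommGroup H] [InnerProductSpace ℂ H] [CompleteSpace H]

/-- The resolvent set of a partially defined operator: `z` such that `A - z` has a bounded
two-sided inverse. -/
def ResolventSetP (A : H →ₗ.[ℂ] H) : Set ℂ :=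
  { z | ∃ R : H →L[ℂ] H, (∀ x : H, ∃ hx : R x ∈ A.domain, A ⟨R x, hx⟩ - z • R x = x) ∧
      (∀ ψ : A.domain, R (A ψ - z • (ψ : H)) = (ψ : H)) }

/-- The spectrum of a partially defined operator. -/
def SpectrumP (A : H →ₗ.[ℂ] H) : Set ℂ := (ResolventSetP A)ᶜ

/-- `z` is an eigenvalue of `A`. -/
def HasEigen (A : H →ₗ.[ℂ] H) (z : ℂ) : Prop :=
  ∃ ψ : A.domain, (ψ : H) ≠ 0 ∧ A ψ = z • (ψ : H)

/-- The eigenspace of `A` for the eigenvalue `z` (as the span of all eigenvectors). -/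
def eigSpace (A : H →ₗ.[ℂ] H) (z : ℂ) : Submodule ℂ H :=
  Submodule.span ℂ {ψ : H | ∃ h : ψ ∈ A.domain, A ⟨ψ, h⟩ = z • ψ}

/-- `A` has purely discrete spectrum: every spectral point is an isolated eigenvalue of
finite multiplicity. -/
def PurelyDiscrete (A : H →ₗ.[ℂ] H) : Prop :=
  ∀ z ∈ SpectrumP A, z ∉ closure (SpectrumP A \ {z}) ∧ HasEigen A z ∧
    FiniteDimensional ℂ (eigSpace A z)

/-- The Hilbert space `ℓ²(ℤ)`. -/
abbrev ℓ2Z : Type := lp (fun _ : ℤ => ℂ) 2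

/-- The standard orthonormal basis vectors of `ℓ²(ℤ)`. -/
def eV (n : ℤ) : ℓ2Z := lp.single 2 n 1

/-- The dense subspace of finitely supported vectors. -/
def finSupp : Submodule ℂ ℓ2Z := Submodule.span ℂ (Set.range eV)

namespace BHaux

/-- Embedding of finitely supported coefficient functions into `ℓ²(ℤ)`. -/
def J : (ℤ →₀ ℂ) →ₗ[ℂ] ℓ2Z := Finsupp.lsum ℂ fun n => LinearMap.toSpanSingleton ℂ ℓ2Z (eV n)

lemma J_single (n : ℤ) (c : ℂ) : J (Finsupp.single n c) = c • eV n := by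
  simp only [J, Finsupp.lsum_single, LinearMap.toSpanSingleton_apply]

lemma inner_eV (m : ℤ) (x : ℓ2Z) : ⟪eV m, x⟫ = x m := by
  simp [eV, lp.inner_single_left]

lemma inner_eV_eV (m n : ℤ) : ⟪eV m, eV n⟫ = if m = n then 1 else 0 := by
  rw [inner_eV, eV, lp.single_apply]
  split_ifs with hc <;> simp [hc]

lemma inner_eV_J (m : ℤ) (f : ℤ →₀ ℂ) : ⟪eV m, J f⟫ = f m := by
  induction f using Finsupp.induction_linear with
  | zero => simp
  | add f g hf hg => rw [map_add, inner_add_right, hf, hg, Finsupp.add_apply]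
  | single n c =>
      rw [J_single, inner_smul_right, inner_eV_eV, Finsupp.single_apply]
      rcases eq_or_ne m n with rfl | hne
      · simp
      · simp [hne, Ne.symm hne]

lemma J_mem (f : ℤ →₀ ℂ) : J f ∈ finSupp := by
  induction f using Finsupp.induction_linear with
  | zero => rw [map_zero]; exact Submodule.zero_mem _
  | add f g hf hg => rw [map_add]; exact Submodule.add_mem _ hf hg
  | single n c =>
      rw [J_single]
      exact Submodule.smul_mem _ _ (Submodule.subset_span ⟨n, rfl⟩)

lemma J_surj {x : ℓ2Z} (hx : x ∈ finSupp) : ∃ f : ℤ →₀ ℂ, J f = x := by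
  induction hx using Submodule.span_induction with
  | mem x hx => obtain ⟨n, rfl⟩ := hx; exact ⟨Finsupp.single n 1, by rw [J_single, one_smul]⟩
  | zero => exact ⟨0, by rw [map_zero]⟩
  | add x y hx hy ihx ihy =>
      obtain ⟨f, rfl⟩ := ihx; obtain ⟨g, rfl⟩ := ihy; exact ⟨f + g, by rw [map_add]⟩
  | smul c x hx ihx => obtain ⟨f, rfl⟩ := ihx; exact ⟨c • f, by rw [map_smul]⟩

variable (K : ℂ) (a : ℤ → ℂ)

/-- The image of the `n`-th basis vector under the tridiagonal operator, as a finsupp. -/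
def bvec (n : ℤ) : ℤ →₀ ℂ :=
  (K * a (n + 1)) • Finsupp.single (n + 1) 1 - (K * a n) • Finsupp.single (n - 1) 1

/-- The tridiagonal operator on finsupps. -/
def Bop : (ℤ →₀ ℂ) →ₗ[ℂ] (ℤ →₀ ℂ) :=
  Finsupp.lsum ℂ fun n => LinearMap.toSpanSingleton ℂ _ (bvec K a n)

lemma Bop_single (n : ℤ) (c : ℂ) :
    Bop K a (Finsupp.single n c) = c • bvec K a n := by
  simp only [Bop, Finsupp.lsum_single, LinearMap.toSpanSingleton_apply]

lemma J_bvec (n : ℤ) :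
    J (bvec K a n) = (K * a (n + 1)) • eV (n + 1) - (K * a n) • eV (n - 1) := by
  rw [bvec, map_sub, map_smul, map_smul, J_single, J_single, one_smul, one_smul]

lemma inner_eV_J_bvec (m n : ℤ) :
    ⟪eV m, J (bvec K a n)⟫ =
      (if m = n + 1 then K * a (n + 1) else 0) - (if m = n - 1 then K * a n else 0) := by
  rw [J_bvec, inner_sub_right, inner_smul_right, inner_smul_right, inner_eV_eV, inner_eV_eV]
  split_ifs <;> ring

lemma bvec_symm (hK : (starRingEnd ℂ) K = -K) (ha : ∀ n, (starRingEnd ℂ) (a n) = a n)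
    (m n : ℤ) : ⟪eV m, J (bvec K a n)⟫ = ⟪J (bvec K a m), eV n⟫ := by
  rw [inner_eV_J_bvec,
    show ⟪J (bvec K a m), eV n⟫ = (starRingEnd ℂ) ⟪eV n, J (bvec K a m)⟫ from
      (inner_conj_symm _ _).symm,
    inner_eV_J_bvec, map_sub]
  have e1 : (starRingEnd ℂ) (if n = m + 1 then K * a (m + 1) else 0)
      = if n = m + 1 then -(K * a (m + 1)) else 0 := by
    split_ifs
    · rw [map_mul, hK, ha]; ring
    · exact map_zero _
  have e2 : (starRingEnd ℂ) (if n = m - 1 then K * a m else 0)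
      = if n = m - 1 then -(K * a m) else 0 := by
    split_ifs
    · rw [map_mul, hK, ha]; ring
    · exact map_zero _
  rw [e1, e2]
  by_cases h1 : m = n + 1
  · subst h1
    rw [if_pos rfl, if_neg (by omega), if_neg (by omega), if_pos (by omega)]
    ring
  · by_cases h2 : m = n - 1
    · subst h2
      rw [if_neg (by omega), if_pos rfl, if_pos (by omega), if_neg (by omega)]
      have : n - 1 + 1 = n := by omega
      rw [this]; ring
    · rw [if_neg h1, if_neg h2, if_neg (by omega), if_neg (by omega)]

lemma Bop_symm (hK : (starRingEnd ℂ) K = -K) (ha : ∀ n, (starRingEnd ℂ) (a n) = a n)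
    (f g : ℤ →₀ ℂ) : ⟪J f, J (Bop K a g)⟫ = ⟪J (Bop K a f), J g⟫ := by
  induction f using Finsupp.induction_linear with
  | zero => simp
  | add f f' hf hf' => simp only [map_add, inner_add_left, hf, hf']
  | single m c =>
      induction g using Finsupp.induction_linear with
      | zero => simp
      | add g g' hg hg' => simp only [map_add, inner_add_right, hg, hg']
      | single n c' =>
          rw [Bop_single, Bop_single, map_smul, map_smul, J_single, J_single,
            inner_smul_left, inner_smul_right, inner_smul_left, inner_smul_right,
            bvec_symm K a hK ha m n]

lemma inner_eV_J_Bop (m : ℤ) (f : ℤ →₀ ℂ) :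
    ⟪eV m, J (Bop K a f)⟫ = K * a m * f (m - 1) - K * a (m + 1) * f (m + 1) := by
  induction f using Finsupp.induction_linear with
  | zero => simp
  | add f g hf hg =>
      rw [map_add, map_add, inner_add_right, hf, hg, Finsupp.add_apply, Finsupp.add_apply]
      ring
  | single n c =>
      rw [Bop_single, map_smul, inner_smul_right, inner_eV_J_bvec, Finsupp.single_apply,
        Finsupp.single_apply]
      by_cases h1 : m = n + 1
      · subst h1
        rw [if_pos rfl, if_neg (by omega), if_pos (by omega), if_neg (by omega)]
        ring
      · by_cases h2 : m = n - 1
        · rw [if_neg h1, if_pos h2, if_neg (by omega), if_pos (by omega)]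
          have : m + 1 = n := by omega
          rw [this]; ring
        · rw [if_neg h1, if_neg h2, if_neg (by omega), if_neg (by omega)]
          ring

lemma inner_J_J (f g : ℤ →₀ ℂ) :
    ⟪J f, J g⟫ = g.sum fun n c => (starRingEnd ℂ) (f n) * c := by
  induction g using Finsupp.induction_linear with
  | zero => simp
  | add g g' hg hg' =>
      rw [map_add, inner_add_right, hg, hg',
        Finsupp.sum_add_index (by simp) (by intro n _ c c'; ring)]
  | single n c =>
      rw [J_single, inner_smul_right, Finsupp.sum_single_index (by simp),
        show ⟪J f, eV n⟫ = (starRingEnd ℂ) ⟪eV n, J f⟫ from (inner_conj_symm _ _).symm,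
        inner_eV_J]
      ring

variable (d : ℤ → ℝ)

/-- Diagonal operator with entries `d`. -/
def Dop : (ℤ →₀ ℂ) →ₗ[ℂ] (ℤ →₀ ℂ) :=
  Finsupp.lsum ℂ fun n => LinearMap.toSpanSingleton ℂ _ ((d n : ℂ) • Finsupp.single n 1)

lemma Dop_single (n : ℤ) (c : ℂ) :
    Dop d (Finsupp.single n c) = (c * d n) • Finsupp.single n 1 := by
  simp only [Dop, Finsupp.lsum_single, LinearMap.toSpanSingleton_apply, smul_smul]

lemma Dop_apply (f : ℤ →₀ ℂ) (m : ℤ) : (Dop d f) m = (d m : ℂ) * f m := by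
  induction f using Finsupp.induction_linear with
  | zero => simp
  | add f g hf hg => rw [map_add, Finsupp.add_apply, hf, hg, Finsupp.add_apply]; ring
  | single n c =>
      rw [Dop_single, Finsupp.smul_apply, Finsupp.single_apply, Finsupp.single_apply]
      rcases eq_or_ne n m with rfl | hne
      · rw [if_pos rfl, if_pos rfl, smul_eq_mul]; ring
      · rw [if_neg hne, if_neg hne, smul_zero, mul_zero]

/-- The diagonal quadratic form. -/
def Sq (f : ℤ →₀ ℂ) : ℝ := ∑ n ∈ f.support, d n * Complex.normSq (f n)

lemma Sq_nonneg (hd : ∀ n, 0 ≤ d n) (f : ℤ →₀ ℂ) : 0 ≤ Sq d f :=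
  Finset.sum_nonneg fun n _ => mul_nonneg (hd n) (Complex.normSq_nonneg _)

lemma le_Sq (hd : ∀ n, 0 ≤ d n) (f : ℤ →₀ ℂ) (m : ℤ) :
    d m * Complex.normSq (f m) ≤ Sq d f := by
  by_cases hm : m ∈ f.support
  · exact Finset.single_le_sum (fun n _ => mul_nonneg (hd n) (Complex.normSq_nonneg _)) hm
  · have h0 : f m = 0 := Finsupp.notMem_support_iff.mp hm
    rw [h0]
    simpa using Sq_nonneg d hd f

lemma inner_J_Dop (f : ℤ →₀ ℂ) : ⟪J f, J (Dop d f)⟫ = ((Sq d f : ℝ) : ℂ) := by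
  rw [inner_J_J, Finsupp.sum]
  have hsub : (Dop d f).support ⊆ f.support := by
    intro n hn
    rw [Finsupp.mem_support_iff] at hn ⊢
    intro h0; exact hn (by rw [Dop_apply, h0, mul_zero])
  rw [Finset.sum_subset hsub (fun n _ hn => by
    rw [Finsupp.notMem_support_iff.mp hn, mul_zero])]
  rw [Sq, Complex.ofReal_sum]
  refine Finset.sum_congr rfl fun n _ => ?_
  rw [Dop_apply, Complex.ofReal_mul, Complex.normSq_eq_conj_mul_self]
  ring

end BHaux

open BHaux Topology

set_option maxHeartbeats 1000000

/-- Zero is not an eigenvalue of the closure of `h^{(0)} = (1/δ²)β² + γ²p²` on the lattice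
`μ ∈ 2δℤ` (case `ε = 0`, `b₀ = 0`). This is the key fact behind the black-hole mass gap. -/
theorem zero_not_eigenvalue_h0
    (γ ℓ δ : ℝ) (hγ : 0 < γ) (hℓ : 0 < ℓ) (hδ : 0 < δ)
    (β : ℓ2Z →ₗ.[ℂ] ℓ2Z)
    (hdomβ : β.domain = finSupp)
    (hactβ : ∀ (n : ℤ) (hn : eV n ∈ β.domain),
      β ⟨eV n, hn⟩ = (((γ * ℓ ^ 2 : ℝ) : ℂ) / (4 * Complex.I)) •
        (((2 * (n : ℝ) * δ + 2 * δ : ℝ) : ℂ) • eV (n + 1)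
          - ((2 * (n : ℝ) * δ : ℝ) : ℂ) • eV (n - 1)))
    (h : ℓ2Z →ₗ.[ℂ] ℓ2Z)
    (hdomh : h.domain = finSupp)
    (hacth : ∀ (n : ℤ) (hn : eV n ∈ h.domain) (h1 : eV n ∈ β.domain)
        (h2 : β ⟨eV n, h1⟩ ∈ β.domain),
      h ⟨eV n, hn⟩ = ((1 / δ ^ 2 : ℝ) : ℂ) • β ⟨β ⟨eV n, h1⟩, h2⟩
        + ((γ ^ 2 * (γ * ℓ ^ 2 / 2 * (2 * (n : ℝ) * δ)) ^ 2 : ℝ) : ℂ) • eV n) :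
    ¬ HasEigen h.closure 0 := by
  classical
  rintro ⟨φ, hφne, hφeq⟩
  obtain ⟨K, hKdef⟩ : ∃ K : ℂ, K = ((γ * ℓ ^ 2 : ℝ) : ℂ) / (4 * Complex.I) := ⟨_, rfl⟩
  obtain ⟨a, hadef⟩ : ∃ a : ℤ → ℂ, a = fun n : ℤ => ((2 * (n : ℝ) * δ : ℝ) : ℂ) := ⟨_, rfl⟩
  obtain ⟨d, hddef⟩ : ∃ d : ℤ → ℝ,
      d = fun n : ℤ => γ ^ 2 * (γ * ℓ ^ 2 / 2 * (2 * (n : ℝ) * δ)) ^ 2 := ⟨_, rfl⟩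
  rw [← hKdef] at hactβ
  have hK : (starRingEnd ℂ) K = -K := by
    rw [hKdef, map_div₀, map_mul, Complex.conj_I, Complex.conj_ofReal, map_ofNat,
      mul_neg, div_neg]
  have ha : ∀ n, (starRingEnd ℂ) (a n) = a n := fun n => by
    simp only [hadef]; exact Complex.conj_ofReal _
  have hd0 : ∀ n, 0 ≤ d n := fun n => by
    simp only [hddef]; exact mul_nonneg (sq_nonneg _) (sq_nonneg _)
  have hKne : K ≠ 0 := by
    rw [hKdef]
    refine div_ne_zero (Complex.ofReal_ne_zero.mpr (by positivity)) ?_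
    exact mul_ne_zero (by norm_num) Complex.I_ne_zero
  -- action of β on the finsupp model
  have hβJ : ∀ g : ℤ →₀ ℂ, ∀ hg : J g ∈ β.domain, β ⟨J g, hg⟩ = J (Bop K a g) := by
    intro g
    induction g using Finsupp.induction_linear with
    | zero =>
        intro hg
        have h0 : (⟨J 0, hg⟩ : β.domain) = 0 := Subtype.ext (by show J 0 = 0; exact map_zero J)
        rw [h0, β.map_zero, map_zero, map_zero]
    | add f g hf hg =>
        intro hmem
        have h1 : J f ∈ β.domain := hdomβ ▸ J_mem f
        have h2 : J g ∈ β.domain := hdomβ ▸ J_mem g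
        have hsplit : (⟨J (f + g), hmem⟩ : β.domain) = ⟨J f, h1⟩ + ⟨J g, h2⟩ :=
          Subtype.ext (by show J (f + g) = J f + J g; exact map_add J f g)
        rw [hsplit, β.map_add, hf h1, hg h2, map_add, map_add]
    | single n c =>
        intro hmem
        have h1 : eV n ∈ β.domain := hdomβ ▸ Submodule.subset_span ⟨n, rfl⟩
        have hsplit : (⟨J (Finsupp.single n c), hmem⟩ : β.domain) = c • ⟨eV n, h1⟩ :=
          Subtype.ext (by show J (Finsupp.single n c) = c • eV n; exact J_single n c)
        have e1 : ((2 * (n : ℝ) * δ + 2 * δ : ℝ) : ℂ) = a (n + 1) := by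
          simp only [hadef]; push_cast; ring
        have e2 : ((2 * (n : ℝ) * δ : ℝ) : ℂ) = a n := by
          simp only [hadef]
        rw [hsplit, β.map_smul, hactβ n h1, e1, e2, Bop_single, map_smul, J_bvec]
        simp only [smul_sub, smul_smul]
  -- action of h on the finsupp model
  have hhJ : ∀ g : ℤ →₀ ℂ, ∀ hg : J g ∈ h.domain,
      h ⟨J g, hg⟩ = ((1 / δ ^ 2 : ℝ) : ℂ) • J (Bop K a (Bop K a g)) + J (Dop d g) := by
    intro g
    induction g using Finsupp.induction_linear with
    | zero =>
        intro hg
        have h0 : (⟨J 0, hg⟩ : h.domain) = 0 := Subtype.ext (by show J 0 = 0; exact map_zero J)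
        rw [h0, h.map_zero, map_zero, map_zero, map_zero, map_zero, map_zero, smul_zero, zero_add]
    | add f g hf hg =>
        intro hmem
        have h1 : J f ∈ h.domain := hdomh ▸ J_mem f
        have h2 : J g ∈ h.domain := hdomh ▸ J_mem g
        have hsplit : (⟨J (f + g), hmem⟩ : h.domain) = ⟨J f, h1⟩ + ⟨J g, h2⟩ :=
          Subtype.ext (by show J (f + g) = J f + J g; exact map_add J f g)
        rw [hsplit, h.map_add, hf h1, hg h2]
        simp only [map_add, smul_add]
        abel
    | single n c =>
        intro hmem
        have hn' : eV n ∈ h.domain := hdomh ▸ Submodule.subset_span ⟨n, rfl⟩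
        have h1 : eV n ∈ β.domain := hdomβ ▸ Submodule.subset_span ⟨n, rfl⟩
        have hb1 : β ⟨eV n, h1⟩ = J (Bop K a (Finsupp.single n 1)) := by
          have he : (⟨eV n, h1⟩ : β.domain) = ⟨J (Finsupp.single n 1), hdomβ ▸ J_mem _⟩ :=
            Subtype.ext (by show eV n = J (Finsupp.single n 1); rw [J_single, one_smul])
          rw [he, hβJ]
        have h2 : β ⟨eV n, h1⟩ ∈ β.domain := by rw [hb1, hdomβ]; exact J_mem _
        have hb2 : β ⟨β ⟨eV n, h1⟩, h2⟩ = J (Bop K a (Bop K a (Finsupp.single n 1))) := by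
          have he : (⟨β ⟨eV n, h1⟩, h2⟩ : β.domain)
              = ⟨J (Bop K a (Finsupp.single n 1)), hdomβ ▸ J_mem _⟩ :=
            Subtype.ext (by show β ⟨eV n, h1⟩ = J (Bop K a (Finsupp.single n 1)); exact hb1)
          rw [he, hβJ]
        have hsplit : (⟨J (Finsupp.single n c), hmem⟩ : h.domain) = c • ⟨eV n, hn'⟩ :=
          Subtype.ext (by show J (Finsupp.single n c) = c • eV n; exact J_single n c)
        have hsc : (Finsupp.single n c : ℤ →₀ ℂ) = c • Finsupp.single n 1 := by
          rw [Finsupp.smul_single, smul_eq_mul, mul_one]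
        rw [hsplit, h.map_smul, hacth n hn' h1 h2, hb2, hsc]
        simp only [map_smul, smul_add, smul_smul]
        congr 1
        · rw [mul_comm]
        · rw [Dop_single, map_smul, J_single, smul_smul, smul_smul]
          congr 1
          simp only [hddef]
          push_cast
          ring
  -- the quadratic form identity
  have quad : ∀ g : ℤ →₀ ℂ,
      (⟪J g, ((1 / δ ^ 2 : ℝ) : ℂ) • J (Bop K a (Bop K a g)) + J (Dop d g)⟫ : ℂ)
        = ((1 / δ ^ 2 * ‖J (Bop K a g)‖ ^ 2 + Sq d g : ℝ) : ℂ) := by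
    intro g
    rw [inner_add_right, inner_smul_right, Bop_symm K a hK ha g (Bop K a g),
      inner_self_eq_norm_sq_to_K, inner_J_Dop]
    rw [Complex.ofReal_add, Complex.ofReal_mul, Complex.ofReal_pow]
    rfl
  -- extract an approximating sequence from the closure
  have hφ0 : h.closure φ = 0 := by rw [hφeq, zero_smul]
  have hgr : ((φ : ℓ2Z), (0 : ℓ2Z)) ∈ closure (h.graph : Set (ℓ2Z × ℓ2Z)) := by
    have hm := h.closure.mem_graph φ
    rw [hφ0] at hm
    by_cases hc : h.IsClosable
    · rw [← hc.graph_closure_eq_closure_graph] at hm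
      rw [← Submodule.topologicalClosure_coe]
      exact hm
    · have hgg : h.closure.graph = h.graph := by rw [h.closure_def' hc]
      rw [hgg] at hm
      exact subset_closure hm
  obtain ⟨u, hu1, hu2⟩ := mem_closure_iff_seq_limit.mp hgr
  have hmem1 : ∀ k, ∃ ψ : h.domain, ((ψ : ℓ2Z), h ψ) = u k := fun k =>
    h.mem_graph_iff'.mp (hu1 k)
  choose ψ hψ using hmem1
  have hψ1 : ∀ k, (ψ k : ℓ2Z) = (u k).1 := fun k => congrArg Prod.fst (hψ k)
  have hψ2 : ∀ k, h (ψ k) = (u k).2 := fun k => congrArg Prod.snd (hψ k)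
  have hmem2 : ∀ k, ((ψ k : ℓ2Z)) ∈ finSupp := fun k => hdomh ▸ (ψ k).2
  choose fs hfs using fun k => J_surj (hmem2 k)
  -- limits of the two components
  have hx : Tendsto (fun k => (J (fs k) : ℓ2Z)) atTop (𝓝 (φ : ℓ2Z)) := by
    have h1 := (continuous_fst.tendsto ((φ : ℓ2Z), (0 : ℓ2Z))).comp hu2
    have h2 : (fun k => (J (fs k) : ℓ2Z)) = fun k => (u k).1 := by
      funext k; rw [hfs k, hψ1 k]
    rw [h2]
    exact h1
  have hy : Tendsto (fun k => h (ψ k)) atTop (𝓝 (0 : ℓ2Z)) := by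
    have h1 := (continuous_snd.tendsto ((φ : ℓ2Z), (0 : ℓ2Z))).comp hu2
    have h2 : (fun k => h (ψ k)) = fun k => (u k).2 := by funext k; rw [hψ2 k]
    rw [h2]
    exact h1
  have hψval : ∀ k, h (ψ k)
      = ((1 / δ ^ 2 : ℝ) : ℂ) • J (Bop K a (Bop K a (fs k))) + J (Dop d (fs k)) := by
    intro k
    have hmem : J (fs k) ∈ h.domain := by rw [hfs k]; exact (ψ k).2
    have he : ψ k = ⟨J (fs k), hmem⟩ := Subtype.ext (hfs k).symm
    rw [he, hhJ]
  -- the real quadratic form along the sequence tends to 0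
  obtain ⟨r, hrdef⟩ : ∃ r : ℕ → ℝ,
      r = fun k => 1 / δ ^ 2 * ‖J (Bop K a (fs k))‖ ^ 2 + Sq d (fs k) := ⟨_, rfl⟩
  have ht : Tendsto (fun k => (⟪(J (fs k) : ℓ2Z), h (ψ k)⟫ : ℂ)) atTop (𝓝 0) := by
    have h1 := Filter.Tendsto.inner (𝕜 := ℂ) hx hy
    rw [inner_zero_right] at h1
    exact h1
  have hteq : ∀ k, (⟪(J (fs k) : ℓ2Z), h (ψ k)⟫ : ℂ) = ((r k : ℝ) : ℂ) := by
    intro k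
    rw [hψval k, quad (fs k), hrdef]
  have hr0 : Tendsto r atTop (𝓝 0) := by
    have h1 : Tendsto (fun k => (⟪(J (fs k) : ℓ2Z), h (ψ k)⟫ : ℂ).re) atTop (𝓝 0) := by
      have h0 := (Complex.continuous_re.tendsto 0).comp ht
      rw [Complex.zero_re] at h0
      exact h0
    have h2 : (fun k => (⟪(J (fs k) : ℓ2Z), h (ψ k)⟫ : ℂ).re) = r := by
      funext k; rw [hteq k, Complex.ofReal_re]
    rw [← h2]
    exact h1
  have hrBound : ∀ k, 1 / δ ^ 2 * ‖J (Bop K a (fs k))‖ ^ 2 ≤ r k := by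
    intro k
    have hs := Sq_nonneg d hd0 (fs k)
    simp only [hrdef]
    linarith
  have hSqBound : ∀ k, Sq d (fs k) ≤ r k := by
    intro k
    have h1 : 0 ≤ 1 / δ ^ 2 * ‖J (Bop K a (fs k))‖ ^ 2 := by positivity
    simp only [hrdef]
    linarith
  -- the norm of β applied to the sequence tends to 0
  have hBlim : Tendsto (fun k => ‖J (Bop K a (fs k))‖) atTop (𝓝 0) := by
    have hδ2 : (0 : ℝ) < δ ^ 2 := by positivity
    have hsq : Tendsto (fun k => ‖J (Bop K a (fs k))‖ ^ 2) atTop (𝓝 0) := by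
      have hub : ∀ k, ‖J (Bop K a (fs k))‖ ^ 2 ≤ δ ^ 2 * r k := by
        intro k
        have h2 : δ ^ 2 * (1 / δ ^ 2 * ‖J (Bop K a (fs k))‖ ^ 2) = ‖J (Bop K a (fs k))‖ ^ 2 := by
          field_simp
        calc ‖J (Bop K a (fs k))‖ ^ 2
            = δ ^ 2 * (1 / δ ^ 2 * ‖J (Bop K a (fs k))‖ ^ 2) := h2.symm
          _ ≤ δ ^ 2 * r k := by
              exact mul_le_mul_of_nonneg_left (hrBound k) (le_of_lt hδ2)
      have hg : Tendsto (fun k => δ ^ 2 * r k) atTop (𝓝 0) := by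
        have hg0 := hr0.const_mul (δ ^ 2)
        rw [mul_zero] at hg0
        exact hg0
      exact squeeze_zero (fun k => sq_nonneg _) hub hg
    have heq : (fun k => ‖J (Bop K a (fs k))‖) = fun k => Real.sqrt (‖J (Bop K a (fs k))‖ ^ 2) := by
      funext k; rw [Real.sqrt_sq (norm_nonneg _)]
    rw [heq]
    have h3 := (Real.continuous_sqrt.tendsto 0).comp hsq
    rw [Real.sqrt_zero] at h3
    exact h3
  -- pointwise convergence of coefficients
  have hcoef : ∀ m : ℤ, Tendsto (fun k => (fs k) m) atTop (𝓝 (⟪eV m, (φ : ℓ2Z)⟫)) := by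
    intro m
    have h5 := Filter.Tendsto.inner (𝕜 := ℂ)
      (tendsto_const_nhds (x := eV m) (f := atTop (α := ℕ))) hx
    have h6 : (fun k => (⟪eV m, (J (fs k) : ℓ2Z)⟫ : ℂ)) = fun k => (fs k) m := by
      funext k; rw [inner_eV_J]
    rw [h6] at h5
    exact h5
  -- all coefficients of φ away from 0 vanish
  have hzero : ∀ m : ℤ, m ≠ 0 → ⟪eV m, (φ : ℓ2Z)⟫ = 0 := by
    intro m hm
    have hdm : 0 < d m := by
      simp only [hddef]
      have hne : γ * ℓ ^ 2 / 2 * (2 * (m : ℝ) * δ) ≠ 0 := by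
        refine mul_ne_zero (by positivity) ?_
        refine mul_ne_zero (mul_ne_zero (by norm_num) ?_) (ne_of_gt hδ)
        exact Int.cast_ne_zero.mpr hm
      exact mul_pos (by positivity) (pow_two_pos_of_ne_zero hne)
    have hle : ∀ k, d m * Complex.normSq ((fs k) m) ≤ r k := fun k =>
      le_trans (le_Sq d hd0 (fs k) m) (hSqBound k)
    have hlim : Tendsto (fun k => d m * Complex.normSq ((fs k) m)) atTop
        (𝓝 (d m * Complex.normSq (⟪eV m, (φ : ℓ2Z)⟫))) :=
      tendsto_const_nhds.mul ((Complex.continuous_normSq.tendsto _).comp (hcoef m))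
    have hle0 : d m * Complex.normSq (⟪eV m, (φ : ℓ2Z)⟫) ≤ 0 :=
      le_of_tendsto_of_tendsto' hlim hr0 hle
    have hns : Complex.normSq (⟪eV m, (φ : ℓ2Z)⟫) = 0 := by
      have hnn := Complex.normSq_nonneg (⟪eV m, (φ : ℓ2Z)⟫)
      nlinarith
    exact Complex.normSq_eq_zero.mp hns
  -- the coefficient at 0 vanishes as well
  have hzero0 : ⟪eV 0, (φ : ℓ2Z)⟫ = 0 := by
    have hw : ∀ k, (⟪eV 1, J (Bop K a (fs k))⟫ : ℂ)
        = K * a 1 * (fs k) 0 - K * a 2 * (fs k) 2 := by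
      intro k
      rw [inner_eV_J_Bop]
      norm_num
    have hw1 : Tendsto (fun k => (⟪eV 1, J (Bop K a (fs k))⟫ : ℂ)) atTop
        (𝓝 (K * a 1 * ⟪eV 0, (φ : ℓ2Z)⟫ - K * a 2 * ⟪eV 2, (φ : ℓ2Z)⟫)) := by
      simp only [hw]
      exact (tendsto_const_nhds.mul (hcoef 0)).sub (tendsto_const_nhds.mul (hcoef 2))
    have hw2 : Tendsto (fun k => (⟪eV 1, J (Bop K a (fs k))⟫ : ℂ)) atTop (𝓝 0) := by
      refine squeeze_zero_norm (fun k => norm_inner_le_norm _ _) ?_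
      have h4 := hBlim.const_mul ‖eV 1‖
      rw [mul_zero] at h4
      exact h4
    have heq := tendsto_nhds_unique hw1 hw2
    rw [hzero 2 (by norm_num), mul_zero, sub_zero] at heq
    have ha1 : a 1 ≠ 0 := by
      simp only [hadef]
      rw [Complex.ofReal_ne_zero]
      push_cast
      positivity
    rcases mul_eq_zero.mp heq with h' | h'
    · rcases mul_eq_zero.mp h' with h'' | h''
      · exact absurd h'' hKne
      · exact absurd h'' ha1
    · exact h'
  -- conclude φ = 0
  apply hφne
  apply lp.ext
  funext m
  have : ⟪eV m, (φ : ℓ2Z)⟫ = 0 := by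
    rcases eq_or_ne m 0 with rfl | hm
    · exact hzero0
    · exact hzero m hm
  rw [inner_eV] at this
  rw [this]
  rfl
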